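/- arXiv:1910.03674 — 2 statements merged into one kernel-verified Lean document; each statement's English description precedes it below -/
import Mathlib

section
/- Let A be a Stone topological L-algebra. Then A is residually finite (i.e., profinite) if and only if for every clopen subset K ⊆ A the set {p : A × A | σ_K p.1 p.2} is a clopen subset of A × A. -/
/-!
Kernels of continuous homomorphisms onto finite discrete algebras are exactly the discrete
quotients of `A` that are congruences, and a congruence is invariant under all translations.
Hence a congruence that does not split the clopen set `K` lies below `σ_K`. If such kernels
separate points, compactness of `K ×ˢ Kᶜ` yields finitely many of them whose intersection does
not split `K`; so `σ_K` contains an equivalence relation with open classes and is clopen.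
Conversely `σ_K` is itself a congruence, so when it is clopen it is a discrete quotient, finite
by compactness, and it separates any two points that `K` separates; in a Stone space clopen sets
separate points.
-/

open FirstOrder Language Structure

def IsElemTranslation (L : FirstOrder.Language) {A : Type*} [L.Structure A]
    (g : Function.End A) : Prop :=
  ∃ (n : ℕ) (f : L.Functions n) (i : Fin n) (v : Fin n → A),
    g = fun a => funMap f (Function.update v i a)

def translationMonoid (L : FirstOrder.Language) (A : Type*) [L.Structure A] :
    Submonoid (Function.End A) :=
  Submonoid.closure {g | IsElemTranslation L g}

def syntCong (L : FirstOrder.Language) {A : Type*} [L.Structure A] (K : Set A)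
    (a b : A) : Prop :=
  ∀ g ∈ translationMonoid L A, (g a ∈ K ↔ g b ∈ K)

def ResiduallyFinite (L : FirstOrder.Language) (A : Type*) [TopologicalSpace A]
    [L.Structure A] : Prop :=
  ∀ a b : A, a ≠ b →
    ∃ (F : Type) (_ : Finite F) (iT : TopologicalSpace F) (iS : L.Structure F),
      letI := iT; letI := iS;
      DiscreteTopology F ∧ ∃ φ : A →[L] F, Continuous (φ : A → F) ∧ φ a ≠ φ b

def IsCongruence (L : Language) {A : Type*} [L.Structure A] (r : Setoid A) : Prop :=
  ∀ {n} (f : L.Functions n) (x y : Fin n → A),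
    (∀ i, r (x i) (y i)) → r (funMap f x) (funMap f y)

section Congruence

variable {L : Language} {A : Type*} [L.Structure A]

theorem isElemTranslation_mem_translationMonoid {n : ℕ} (f : L.Functions n) (i : Fin n)
    (v : Fin n → A) :
    (fun a => funMap f (Function.update v i a) : Function.End A) ∈ translationMonoid L A :=
  Submonoid.subset_closure ⟨n, f, i, v, rfl⟩

theorem isCongruence_iff_forall_mem_translationMonoid {r : Setoid A} :
    IsCongruence L r ↔ ∀ g ∈ translationMonoid L A, ∀ x y, r x y → r (g x) (g y) := by
  constructor
  · intro hr g hg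
    induction hg using Submonoid.closure_induction with
    | mem g hg =>
      obtain ⟨n, f, i, v, rfl⟩ := hg
      intro x y hxy
      refine hr f _ _ fun j => ?_
      rcases eq_or_ne j i with rfl | hj
      · simpa only [Function.update_self] using hxy
      · simpa only [Function.update_of_ne hj] using r.refl (v j)
    | one => exact fun x y h => h
    | mul g h _ _ ihg ihh => exact fun x y hxy => ihg _ _ (ihh _ _ hxy)
  · intro hr n f x y hxy
    -- replace the arguments of `f` one at a time, each step being an elementary translation
    have key : ∀ s : Finset (Fin n), r (funMap f x) (funMap f (s.piecewise y x)) := by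
      intro s
      induction s using Finset.induction_on with
      | empty => simpa only [Finset.piecewise_empty] using r.refl _
      | insert i s hi ih =>
        refine r.trans ih ?_
        have hv : s.piecewise y x = Function.update (s.piecewise y x) i (x i) := by
          rw [← Finset.piecewise_eq_of_notMem s y x hi, Function.update_eq_self]
        rw [Finset.piecewise_insert, hv, Function.update_idem]
        exact hr _ (isElemTranslation_mem_translationMonoid f i _) _ _ (hxy i)
    simpa using key Finset.univ

theorem IsCongruence.apply_of_mem_translationMonoid {r : Setoid A} (hr : IsCongruence L r)
    {g : Function.End A} (hg : g ∈ translationMonoid L A) {x y : A} (h : r x y) :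
    r (g x) (g y) :=
  isCongruence_iff_forall_mem_translationMonoid.1 hr g hg x y h

theorem isCongruence_top : IsCongruence L (⊤ : Setoid A) :=
  fun _ _ _ _ => trivial

theorem IsCongruence.inf {r s : Setoid A} (hr : IsCongruence L r) (hs : IsCongruence L s) :
    IsCongruence L (r ⊓ s) :=
  fun f x y h => ⟨hr f x y fun i => (h i).1, hs f x y fun i => (h i).2⟩

theorem isCongruence_ker {F : Type*} [L.Structure F] (φ : A →[L] F) :
    IsCongruence L (Setoid.ker φ) := by
  intro n f x y h
  simp only [Setoid.ker_def, φ.map_fun] at h ⊢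
  exact congrArg _ (funext h)

end Congruence

section SyntacticCongruence

variable {L : Language} {A : Type*} [L.Structure A] {K : Set A}

theorem syntCong.apply_of_mem_translationMonoid {a b : A} (h : syntCong L K a b)
    {g : Function.End A} (hg : g ∈ translationMonoid L A) : syntCong L K (g a) (g b) :=
  fun g' hg' => h (g' * g) (mul_mem hg' hg)

variable (L K) in
def syntCongSetoid : Setoid A where
  r := syntCong L K
  iseqv :=
    ⟨fun _ _ _ => Iff.rfl, fun h g hg => (h g hg).symm,
      fun h h' g hg => (h g hg).trans (h' g hg)⟩

theorem isCongruence_syntCongSetoid : IsCongruence L (syntCongSetoid L K) :=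
  isCongruence_iff_forall_mem_translationMonoid.2 fun _ hg _ _ h =>
    syntCong.apply_of_mem_translationMonoid h hg

theorem IsCongruence.le_syntCongSetoid {r : Setoid A} (hr : IsCongruence L r)
    (hK : ∀ x y, r x y → x ∈ K → y ∈ K) : r ≤ syntCongSetoid L K := fun _ _ h _ hg =>
  have h' := hr.apply_of_mem_translationMonoid hg h
  ⟨hK _ _ h', hK _ _ (r.symm h')⟩

theorem syntCong.mem_iff {a b : A} (h : syntCong L K a b) : a ∈ K ↔ b ∈ K :=
  h 1 (one_mem _)

end SyntacticCongruence

namespace DiscreteQuotient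

variable {X : Type*} [TopologicalSpace X]

theorem isClopen_setOf_rel_of_le (Q : DiscreteQuotient X) {r : Setoid X}
    (h : Q.toSetoid ≤ r) : IsClopen {p : X × X | r p.1 p.2} := by
  let π : X × X → Q × Q := Prod.map Q.proj Q.proj
  have hsat : {p : X × X | r p.1 p.2} = π ⁻¹' (π '' {p | r p.1 p.2}) := by
    refine (Set.subset_preimage_image _ _).antisymm ?_
    rintro ⟨x, y⟩ ⟨⟨x', y'⟩, hr, hxy⟩
    obtain ⟨hx, hy⟩ := Prod.ext_iff.1 hxy
    exact r.trans (r.symm (h (Quotient.exact hx))) (r.trans hr (h (Quotient.exact hy)))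
  rw [hsat]
  exact (isClopen_discrete _).preimage (Q.proj_continuous.prodMap Q.proj_continuous)

def ofIsOpen (r : Setoid X) (h : IsOpen {p : X × X | r p.1 p.2}) : DiscreteQuotient X where
  toSetoid := r
  isOpen_setOfPred_rel _ := h.preimage (continuous_const.prodMk continuous_id)

theorem exists_le_of_forall_ne [CompactSpace X] {P : DiscreteQuotient X → Prop} (htop : P ⊤)
    (hinf : ∀ Q R, P Q → P R → P (Q ⊓ R))
    (hsep : ∀ x y, x ≠ y → ∃ Q, P Q ∧ ¬ Q.toSetoid x y) (Q' : DiscreteQuotient X) :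
    ∃ Q, P Q ∧ Q ≤ Q' := by
  have : Nonempty {Q // P Q} := ⟨⟨⊤, htop⟩⟩
  let U : {Q // P Q} → Set (X × X) := fun Q => {p | ¬ Q.1.toSetoid p.1 p.2}
  have hcpt : IsCompact {p : X × X | ¬ Q'.toSetoid p.1 p.2} :=
    (Q'.isClopen_setOf_rel_of_le le_rfl).isOpen.isClosed_compl.isCompact
  have hcov : {p : X × X | ¬ Q'.toSetoid p.1 p.2} ⊆ ⋃ Q, U Q := fun p hp =>
    have ⟨Q, hQ, hp⟩ := hsep p.1 p.2 fun h => hp (h ▸ Q'.refl _)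
    Set.mem_iUnion.2 ⟨⟨Q, hQ⟩, hp⟩
  have hdir : Directed (· ⊆ ·) U := fun Q R =>
    ⟨⟨Q.1 ⊓ R.1, hinf _ _ Q.2 R.2⟩, fun _ hp h => hp h.1, fun _ hp h => hp h.2⟩
  obtain ⟨⟨Q, hQ⟩, hsub⟩ := hcpt.elim_directed_cover U
    (fun Q => (Q.1.isClopen_setOf_rel_of_le le_rfl).isClosed.isOpen_compl) hcov hdir
  exact ⟨Q, hQ, fun x y h => not_not.1 fun h' => @hsub (x, y) h' h⟩

end DiscreteQuotient

-- Relation symbols hold everywhere on the quotient, so that the projection is a homomorphism.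
abbrev IsCongruence.prestructure {L : Language} {A : Type*} [L.Structure A] {r : Setoid A}
    (hr : IsCongruence L r) : L.Prestructure r where
  toStructure := ⟨funMap, fun _ _ => True⟩
  fun_equiv x y h := hr _ x y h
  rel_equiv _ _ _ := rfl

theorem residuallyFinite_iff_exists_discreteQuotient {L : Language} {A : Type*}
    [TopologicalSpace A] [CompactSpace A] [L.Structure A] :
    ResiduallyFinite L A ↔
      ∀ a b : A, a ≠ b →
        ∃ Q : DiscreteQuotient A, IsCongruence L Q.toSetoid ∧ ¬ Q.toSetoid a b := by
  constructor
  · intro h a b hab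
    obtain ⟨F, _, _, _, _, φ, hφ, hab⟩ := h a b hab
    exact ⟨⟨Setoid.ker φ, fun x => (isOpen_discrete {z | φ x = z}).preimage hφ⟩,
      isCongruence_ker φ, hab⟩
  · intro h a b hab
    obtain ⟨Q, hQ, hab⟩ := h a b hab
    let _ := hQ.prestructure
    let π : A →[L] Q :=
      { toFun := Q.proj
        map_fun' := fun f x => (funMap_quotient_mk' _ f x).symm
        map_rel' := fun r x _ => (relMap_quotient_mk' _ r x).2 trivial }
    obtain ⟨n, ⟨e⟩⟩ := Finite.exists_equiv_fin Q
    let _ : L.Structure (Fin n) := e.inducedStructure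
    exact ⟨Fin n, inferInstance, ⊥, e.inducedStructure, ⟨rfl⟩,
      e.inducedStructureEquiv.toHom.comp π, (Q.proj_isLocallyConstant.comp e).continuous,
      fun h => hab (Quotient.exact (e.injective h))⟩

theorem residuallyFinite_iff_syntCong_isClopen_general (L : FirstOrder.Language) {A : Type*}
    [TopologicalSpace A] [L.Structure A]
    [CompactSpace A] [T2Space A] [TotallyDisconnectedSpace A] :
    ResiduallyFinite L A ↔
      ∀ K : Set A, IsClopen K → IsClopen {p : A × A | syntCong L K p.1 p.2} := by
  rw [residuallyFinite_iff_exists_discreteQuotient]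
  constructor
  · intro hsep K hK
    obtain ⟨Q, hQ, hQK⟩ := DiscreteQuotient.exists_le_of_forall_ne
      (P := fun Q : DiscreteQuotient A => IsCongruence L Q.toSetoid)
      isCongruence_top (fun _ _ => IsCongruence.inf) hsep (.ofIsClopen hK)
    exact Q.isClopen_setOf_rel_of_le (hQ.le_syntCongSetoid fun x y h => (hQK h).1)
  · intro hcl a b hab
    obtain ⟨K, hK, haK, hbK⟩ := exists_isClopen_of_totally_separated hab
    exact ⟨.ofIsOpen (syntCongSetoid L K) (hcl K hK).isOpen, isCongruence_syntCongSetoid,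
      fun h => hbK (syntCong.mem_iff h |>.1 haK)⟩

/-- A Stone topological `L`-algebra is profinite iff the syntactic congruence of every
clopen subset is clopen. -/
theorem residuallyFinite_iff_syntCong_isClopen (L : FirstOrder.Language) {A : Type*}
    [TopologicalSpace A] [L.Structure A]
    [CompactSpace A] [T2Space A] [TotallyDisconnectedSpace A]
    (hA : ∀ (n : ℕ) (f : L.Functions n), Continuous fun v : Fin n → A => funMap f v) :
    ResiduallyFinite L A ↔
      ∀ K : Set A, IsClopen K → IsClopen {p : A × A | syntCong L K p.1 p.2} :=
  residuallyFinite_iff_syntCong_isClopen_general L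
end

section
/- Let n : ℕ, let S : Fin n → Type, let J be a nonempty index type, and for each i : Fin n and j : J let B i j be a Boolean subalgebra of Set (S i). Then the intersection over j ∈ J of the sums ⊕_i (B i j) equals the sum ⊕_i (⋂_j B i j); in lattice terms, ⨅_{j} (⊕_i B i j) = ⊕_i (⨅_j B i j), where infima of Boolean subalgebras are given by intersections of their carriers. -/
/-- A Boolean subalgebra of a Boolean algebra `α`: a set of elements closed under
the Boolean operations. -/
structure BoolSubalg (α : Type*) [BooleanAlgebra α] where
  carrier : Set α
  bot_mem : ⊥ ∈ carrier
  top_mem : ⊤ ∈ carrier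
  sup_mem : ∀ ⦃a⦄, a ∈ carrier → ∀ ⦃b⦄, b ∈ carrier → a ⊔ b ∈ carrier
  inf_mem : ∀ ⦃a⦄, a ∈ carrier → ∀ ⦃b⦄, b ∈ carrier → a ⊓ b ∈ carrier
  compl_mem : ∀ ⦃a⦄, a ∈ carrier → aᶜ ∈ carrier

/-- The infimum (intersection) of a family of Boolean subalgebras. -/
def BoolSubalg.iInf {α : Type*} [BooleanAlgebra α] {J : Type*} (B : J → BoolSubalg α) :
    BoolSubalg α where
  carrier := ⋂ j, (B j).carrier
  bot_mem := Set.mem_iInter.2 fun j => (B j).bot_mem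
  top_mem := Set.mem_iInter.2 fun j => (B j).top_mem
  sup_mem := fun a ha b hb => Set.mem_iInter.2 fun j =>
    (B j).sup_mem (Set.mem_iInter.1 ha j) (Set.mem_iInter.1 hb j)
  inf_mem := fun a ha b hb => Set.mem_iInter.2 fun j =>
    (B j).inf_mem (Set.mem_iInter.1 ha j) (Set.mem_iInter.1 hb j)
  compl_mem := fun a ha => Set.mem_iInter.2 fun j =>
    (B j).compl_mem (Set.mem_iInter.1 ha j)

/-- The Boolean subalgebra generated by a set `s`. -/
def BoolSubalg.gen {α : Type*} [BooleanAlgebra α] (s : Set α) : BoolSubalg α :=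
  BoolSubalg.iInf (J := {B : BoolSubalg α // s ⊆ B.carrier}) fun B => B.1

/-- The sum `⊕ᵢ Bᵢ` of Boolean algebras of sets: the Boolean subalgebra of
`Set (∀ i, S i)` generated by the parallelepipeds `{x | ∀ i, x i ∈ L i}` with
`L i ∈ B i`. -/
def boolSum {n : ℕ} {S : Fin n → Type*} (B : ∀ i, BoolSubalg (Set (S i))) :
    BoolSubalg (Set (∀ i, S i)) :=
  BoolSubalg.gen {P | ∃ L : ∀ i, Set (S i), (∀ i, L i ∈ (B i).carrier) ∧
    P = {x | ∀ i, x i ∈ L i}}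

/-!
A set `P ⊆ ∏ i, S i` lies in `⊕ i, B i` exactly when, for every coordinate `i`, the family of
its slices `{y | update x i y ∈ P}` (over all `x`) is finite and contained in `B i`. Slicing
commutes with the Boolean operations and sends a parallelepiped to one of its sides or to `∅`,
which gives one direction. Conversely, `P` is the union of the parallelepipeds whose sides are
the atoms of the finite algebras generated by its slices, taken through the points of `P`.
This description of `⊕ i, B i` visibly commutes with intersections; a single index `j` of the
nonempty family provides the finiteness.
-/

open Function

namespace BoolSubalg

variable {α : Type*} [BooleanAlgebra α]

theorem ext {A B : BoolSubalg α} (h : A.carrier = B.carrier) : A = B := by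
  cases A; cases B; simpa using h

theorem subset_gen {s : Set α} : s ⊆ (gen s).carrier :=
  fun _ ha => Set.mem_iInter.2 fun B => B.2 ha

theorem gen_subset {s : Set α} {B : BoolSubalg α} (h : s ⊆ B.carrier) :
    (gen s).carrier ⊆ B.carrier :=
  fun _ ha => Set.mem_iInter.1 ha ⟨B, h⟩

variable {β ι : Type*} (C : BoolSubalg (Set β))

theorem biUnion_mem {t : Set ι} (ht : t.Finite) {f : ι → Set β} (h : ∀ i ∈ t, f i ∈ C.carrier) :
    ⋃ i ∈ t, f i ∈ C.carrier := by
  induction t, ht using Set.Finite.induction_on with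
  | empty => simpa using C.bot_mem
  | @insert a t _ _ ih =>
    rw [Set.biUnion_insert]
    exact C.sup_mem (h a (Set.mem_insert _ _)) (ih fun i hi => h i (Set.mem_insert_of_mem _ hi))

theorem biInter_mem {t : Set ι} (ht : t.Finite) {f : ι → Set β} (h : ∀ i ∈ t, f i ∈ C.carrier) :
    ⋂ i ∈ t, f i ∈ C.carrier := by
  simpa [Set.compl_iUnion₂] using
    C.compl_mem (C.biUnion_mem ht fun i hi => C.compl_mem (h i hi))

end BoolSubalg

section Atom

variable {β : Type*}

/-- The cell of `y` in the partition cut out by `s`; for finite `s`, an atom of the Boolean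
algebra generated by `s`. -/
def atom (s : Set (Set β)) (y : β) : Set β :=
  {z | ∀ T ∈ s, z ∈ T ↔ y ∈ T}

theorem mem_atom_self (s : Set (Set β)) (y : β) : y ∈ atom s y :=
  fun _ _ => Iff.rfl

theorem atom_mem {s : Set (Set β)} (C : BoolSubalg (Set β)) (hs : s.Finite)
    (h : s ⊆ C.carrier) (y : β) : atom s y ∈ C.carrier := by
  classical
  have hatom : atom s y = ⋂ T ∈ s, if y ∈ T then T else Tᶜ := by
    ext z
    simp only [atom, Set.mem_iInter]
    refine forall₂_congr fun T _ => ?_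
    split_ifs with hy <;> simp [hy]
  rw [hatom]
  refine C.biInter_mem hs fun T hT => ?_
  split_ifs
  · exact h hT
  · exact C.compl_mem (h hT)

theorem finite_range_atom {s : Set (Set β)} (hs : s.Finite) : (Set.range (atom s)).Finite := by
  have := hs.to_subtype
  refine (Set.finite_range fun p : s → Prop => {z | ∀ T : s, z ∈ (T : Set β) ↔ p T}).subset ?_
  rintro - ⟨y, rfl⟩
  exact ⟨fun T => y ∈ (T : Set β), by ext z; simp [atom]⟩

end Atom

section Slices

variable {ι : Type*} [DecidableEq ι] {S : ι → Type*}

def slices (i : ι) (P : Set (∀ i, S i)) : Set (Set (S i)) :=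
  Set.range fun x => update x i ⁻¹' P

theorem slices_empty_subset (i : ι) : slices i (∅ : Set (∀ i, S i)) ⊆ {∅} := by
  rintro - ⟨x, rfl⟩
  exact Set.preimage_empty

theorem slices_univ_subset (i : ι) : slices i (Set.univ : Set (∀ i, S i)) ⊆ {Set.univ} := by
  rintro - ⟨x, rfl⟩
  exact Set.preimage_univ

theorem slices_union_subset (i : ι) (P Q : Set (∀ i, S i)) :
    slices i (P ∪ Q) ⊆ Set.image2 (· ∪ ·) (slices i P) (slices i Q) := by
  rintro - ⟨x, rfl⟩
  exact ⟨_, ⟨x, rfl⟩, _, ⟨x, rfl⟩, rfl⟩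

theorem slices_inter_subset (i : ι) (P Q : Set (∀ i, S i)) :
    slices i (P ∩ Q) ⊆ Set.image2 (· ∩ ·) (slices i P) (slices i Q) := by
  rintro - ⟨x, rfl⟩
  exact ⟨_, ⟨x, rfl⟩, _, ⟨x, rfl⟩, rfl⟩

theorem slices_compl_subset (i : ι) (P : Set (∀ i, S i)) :
    slices i Pᶜ ⊆ compl '' slices i P := by
  rintro - ⟨x, rfl⟩
  exact ⟨_, ⟨x, rfl⟩, rfl⟩

theorem slices_univ_pi_subset (i : ι) (L : ∀ i, Set (S i)) :
    slices i (Set.univ.pi L) ⊆ {L i, ∅} := by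
  rintro - ⟨x, rfl⟩
  by_cases hx : ∀ j ≠ i, x j ∈ L j
  · exact Or.inl (Set.update_preimage_univ_pi hx)
  · obtain ⟨j, hji, hxj⟩ := not_forall₂.1 hx
    refine Or.inr (Set.eq_empty_of_forall_notMem fun y hy => hxj ?_)
    simpa [update_of_ne hji] using hy j (Set.mem_univ j)

theorem update_mem_iff_of_mem_atom {P : Set (∀ i, S i)} {x : ∀ i, S i} {i : ι} {y : S i}
    (hy : y ∈ atom (slices i P) (x i)) : update x i y ∈ P ↔ x ∈ P := by
  simpa using hy _ ⟨x, rfl⟩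

theorem mem_iff_of_forall_mem_atom [Fintype ι] {P : Set (∀ i, S i)} {x z : ∀ i, S i}
    (hz : ∀ i, z i ∈ atom (slices i P) (x i)) : z ∈ P ↔ x ∈ P := by
  suffices ∀ s : Finset ι, s.piecewise z x ∈ P ↔ x ∈ P by
    simpa using this Finset.univ
  intro s
  induction s using Finset.induction_on with
  | empty => simp
  | @insert i s hi ih =>
    rw [Finset.piecewise_insert, ← ih]
    refine update_mem_iff_of_mem_atom ?_
    rw [Finset.piecewise_eq_of_notMem _ _ _ hi]
    exact hz i

theorem eq_biUnion_univ_pi_atom [Fintype ι] (P : Set (∀ i, S i)) :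
    P = ⋃ x ∈ P, Set.univ.pi fun i => atom (slices i P) (x i) := by
  ext z
  simp only [Set.mem_iUnion, Set.mem_univ_pi, exists_prop]
  exact ⟨fun hz => ⟨z, hz, fun i => mem_atom_self _ _⟩,
    fun ⟨x, hx, hz⟩ => (mem_iff_of_forall_mem_atom hz).2 hx⟩

end Slices

section Sum

variable {n : ℕ} {S : Fin n → Type*}

def finiteSlicesAlg (B : ∀ i, BoolSubalg (Set (S i))) : BoolSubalg (Set (∀ i, S i)) where
  carrier := {P | ∀ i, (slices i P).Finite ∧ slices i P ⊆ (B i).carrier}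
  bot_mem i := ⟨(Set.finite_singleton _).subset (slices_empty_subset i),
    (slices_empty_subset i).trans (Set.singleton_subset_iff.2 (B i).bot_mem)⟩
  top_mem i := ⟨(Set.finite_singleton _).subset (slices_univ_subset i),
    (slices_univ_subset i).trans (Set.singleton_subset_iff.2 (B i).top_mem)⟩
  sup_mem P hP Q hQ i := ⟨((hP i).1.image2 _ (hQ i).1).subset (slices_union_subset i P Q),
    fun _ hT => by
      obtain ⟨U, hU, V, hV, rfl⟩ := slices_union_subset i P Q hT
      exact (B i).sup_mem ((hP i).2 hU) ((hQ i).2 hV)⟩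
  inf_mem P hP Q hQ i := ⟨((hP i).1.image2 _ (hQ i).1).subset (slices_inter_subset i P Q),
    fun _ hT => by
      obtain ⟨U, hU, V, hV, rfl⟩ := slices_inter_subset i P Q hT
      exact (B i).inf_mem ((hP i).2 hU) ((hQ i).2 hV)⟩
  compl_mem P hP i := ⟨((hP i).1.image _).subset (slices_compl_subset i P),
    fun _ hT => by
      obtain ⟨U, hU, rfl⟩ := slices_compl_subset i P hT
      exact (B i).compl_mem ((hP i).2 hU)⟩

theorem mem_boolSum_iff {B : ∀ i, BoolSubalg (Set (S i))} {P : Set (∀ i, S i)} :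
    P ∈ (boolSum B).carrier ↔ ∀ i, (slices i P).Finite ∧ slices i P ⊆ (B i).carrier := by
  refine ⟨fun hP => BoolSubalg.gen_subset (B := finiteSlicesAlg B) ?_ hP, fun hP => ?_⟩
  · rintro - ⟨L, hL, rfl⟩ i
    have hbox : {x | ∀ i, x i ∈ L i} = Set.univ.pi L := by ext; simp
    rw [hbox]
    refine ⟨(Set.toFinite _).subset (slices_univ_pi_subset i L),
      (slices_univ_pi_subset i L).trans ?_⟩
    simpa [Set.insert_subset_iff] using ⟨hL i, (B i).bot_mem⟩
  · let sides : (∀ i, S i) → ∀ i, Set (S i) := fun x i => atom (slices i P) (x i)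
    have hfin : (sides '' P).Finite :=
      (Set.Finite.pi fun i => finite_range_atom (hP i).1).subset <| by
        rintro - ⟨x, -, rfl⟩ i -
        exact ⟨x i, rfl⟩
    rw [eq_biUnion_univ_pi_atom P, ← Set.biUnion_image (g := Set.univ.pi)]
    refine BoolSubalg.biUnion_mem _ hfin fun _ ⟨x, _, hx⟩ =>
      BoolSubalg.subset_gen ⟨_, fun i => atom_mem _ (hP i).1 (hP i).2 (x i), ?_⟩
    ext; simp [← hx, sides]

end Sum
/-- Sums of Boolean algebras of sets commute with (nonempty) intersections:
`⨅ⱼ (⊕ᵢ B i j) = ⊕ᵢ (⨅ⱼ B i j)`, where the infimum of Boolean subalgebras is given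
by the intersection of their carriers. -/
theorem iInf_boolSum_eq_boolSum_iInf {n : ℕ} {S : Fin n → Type*} {J : Type*}
    [Nonempty J] (B : ∀ i : Fin n, J → BoolSubalg (Set (S i))) :
    BoolSubalg.iInf (fun j => boolSum fun i => B i j) =
      boolSum fun i => BoolSubalg.iInf (B i) := by
  refine BoolSubalg.ext (Set.ext fun P => ?_)
  simp only [BoolSubalg.iInf, Set.mem_iInter, mem_boolSum_iff, Set.subset_iInter_iff]
  obtain ⟨j₀⟩ := ‹Nonempty J›
  exact ⟨fun h i => ⟨(h j₀ i).1, fun j => (h j i).2⟩, fun h j i => ⟨(h i).1, (h i).2 j⟩⟩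
end
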